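/- Composition of the secure-compilation proof steps: assume (Back-translation) for every target execution producing a prefix m without Undef there is a whole source program W_S = C_S ⋈ P' producing m; assume (FCC) any source program producing a prefix without Undef compiles to a target program producing the same prefix; assume (Recomposition) if C_T ⋈ P_T and C_T' ⋈ P_T' both produce m then C_T' ⋈ P_T produces m; assume (BCC) if a compiled program produces m then the source produces some m' with m' ≼ m; assume (Blame) if C_S ⋈ P' produces m and C_S ⋈ P produces m' with m' ≼ m, then m' ≼_{prog} m (any Undef in m' is attributable to the program side). Then the compiler satisfies RSC^DC: for every target context C_T and source program P, if C_T ⋈ ↓P produces a prefix m without Undef, there exists a source context C_S and a prefix m' such that C_S ⋈ P produces m' and m' ≼_{prog} m. -/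
import Mathlib


/-- The side (context or program) to which a terminal `Undef` event is attributed. -/
inductive Side
  | ctx
  | prog
deriving DecidableEq

/-- Trace events: ordinary events, or a terminal undefined-behavior event tagged with
the side that caused it. -/
inductive TEvent (Ev : Type)
  | ev (e : Ev)
  | undef (s : Side)

/-- A trace contains no `Undef` event. -/
def NoUndef {Ev : Type} (m : List (TEvent Ev)) : Prop :=
  ∀ s : Side, TEvent.undef s ∉ m

/-- `m' ≼ m`: either `m'` has no `Undef` and equals `m`, or `m' = m₀ ++ [Undef s]`
with `m₀` a prefix of `m`. -/
def Prec {Ev : Type} (m' m : List (TEvent Ev)) : Prop :=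
  (NoUndef m' ∧ m' = m) ∨
  ∃ (m₀ : List (TEvent Ev)) (s : Side), m' = m₀ ++ [TEvent.undef s] ∧ m₀ <+: m

/-- `m' ≼_prog m`: as `≼`, but any terminal `Undef` in `m'` must be attributed to the
program side. -/
def PrecProg {Ev : Type} (m' m : List (TEvent Ev)) : Prop :=
  (NoUndef m' ∧ m' = m) ∨
  ∃ m₀, m' = m₀ ++ [TEvent.undef Side.prog] ∧ m₀ <+: m

/-- Composition of back-translation, forward compiler correctness, recomposition,
backward compiler correctness, and blame yields RSC^DC. -/
theorem rsc_dc {Ev SrcProg SrcCtx TrgProg TrgCtx SrcWhole TrgWhole : Type}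
    (linkS : SrcCtx → SrcProg → SrcWhole) (linkT : TrgCtx → TrgProg → TrgWhole)
    (compP : SrcProg → TrgProg) (compC : SrcCtx → TrgCtx)
    (prodS : SrcWhole → List (TEvent Ev) → Prop)
    (prodT : TrgWhole → List (TEvent Ev) → Prop)
    -- Back-translation
    (hBT : ∀ (W_T : TrgWhole) (m : List (TEvent Ev)), NoUndef m → prodT W_T m →
      ∃ (C_S : SrcCtx) (P' : SrcProg), prodS (linkS C_S P') m)
    -- Forward compiler correctness
    (hFCC : ∀ (C : SrcCtx) (P : SrcProg) (m : List (TEvent Ev)), NoUndef m →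
      prodS (linkS C P) m → prodT (linkT (compC C) (compP P)) m)
    -- Recomposition
    (hRecomp : ∀ (C_T C_T' : TrgCtx) (P_T P_T' : TrgProg) (m : List (TEvent Ev)),
      prodT (linkT C_T P_T) m → prodT (linkT C_T' P_T') m → prodT (linkT C_T' P_T) m)
    -- Backward compiler correctness
    (hBCC : ∀ (C : SrcCtx) (P : SrcProg) (m : List (TEvent Ev)),
      prodT (linkT (compC C) (compP P)) m →
      ∃ m', prodS (linkS C P) m' ∧ Prec m' m)
    -- Blame
    (hBlame : ∀ (C_S : SrcCtx) (P P' : SrcProg) (m m' : List (TEvent Ev)),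
      prodS (linkS C_S P') m → prodS (linkS C_S P) m' → Prec m' m → PrecProg m' m) :
    -- RSC^DC
    ∀ (C_T : TrgCtx) (P : SrcProg) (m : List (TEvent Ev)), NoUndef m →
      prodT (linkT C_T (compP P)) m →
      ∃ (C_S : SrcCtx) (m' : List (TEvent Ev)),
        prodS (linkS C_S P) m' ∧ PrecProg m' m := by
  intro C_T P m hNU hT
  obtain ⟨C_S, P', hS'⟩ := hBT (linkT C_T (compP P)) m hNU hT
  have hT' := hFCC C_S P' m hNU hS'
  have hT2 := hRecomp C_T (compC C_S) (compP P) (compP P') m hT hT'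
  obtain ⟨m', hSm', hPrec⟩ := hBCC C_S P m hT2
  exact ⟨C_S, m', hSm', hBlame C_S P P' m m' hS' hSm' hPrec⟩
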